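/- Let G ∈ C²(ℝ) be nonnegative and let u ∈ C²(ℝ^N) be a nonconstant bounded entire solution of Δu = G'(u) such that G(u(x)) > 0 for all x. Then u is stable (i.e., ∫(|∇v|² + G''(u)v²) ≥ 0 for all compactly supported v ∈ C¹) if and only if for every compactly supported μ ∈ C¹(ℝ^N): ∫_{ℝ^N} G(u)|∇μ|² dx ≥ ∫_{ℝ^N} (G(u) - |∇u|²/2)(-2(√G)''(u))√(G(u)) μ² dx. -/

import Mathlib

open MeasureTheory

/-- The Laplacian of a scalar function on `ℝ^N`, as the sum of the second
partial derivatives in the coordinate directions. -/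
noncomputable def laplacian {N : ℕ} (f : EuclideanSpace ℝ (Fin N) → ℝ)
    (x : EuclideanSpace ℝ (Fin N)) : ℝ :=
  ∑ i : Fin N,
    fderiv ℝ (fun y => fderiv ℝ f y (EuclideanSpace.single i 1)) x
      (EuclideanSpace.single i 1)

/-!
Put `w = √(G ∘ u)`, which is positive and `C²`, so every test function is `v = w μ`. Expanding
`|∇(w μ)|²` and integrating the cross term `w ∇w · ∇(μ²)` by parts gives the ground state identity
`Q(w μ) = ∫ w² |∇μ|² - ∫ (Δw - G''(u) w) w μ²`. Since `G = w²` along `u`, the chain rule together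
with `Δu = G'(u)` turns the coefficient into `Δw - G''(u) w = (G(u) - |∇u|²/2) (-2 (√G)''(u))`.
-/

open Filter Topology

section Gradient

variable {F : Type*} [NormedAddCommGroup F] [InnerProductSpace ℝ F] [CompleteSpace F] {f : F → ℝ}

theorem ContDiff.continuous_gradient (hf : ContDiff ℝ 1 f) : Continuous (gradient f) :=
  (InnerProductSpace.toDual ℝ F).symm.continuous.comp (hf.continuous_fderiv one_ne_zero)

theorem HasCompactSupport.gradient (hf : HasCompactSupport f) : HasCompactSupport (gradient f) :=
  (hf.fderiv ℝ).comp_left (map_zero _)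

end Gradient

theorem HasCompactSupport.sq {X : Type*} [TopologicalSpace X] {b : X → ℝ}
    (hb : HasCompactSupport b) : HasCompactSupport fun x => b x ^ 2 :=
  hb.comp_left (g := (· ^ 2)) (zero_pow two_ne_zero)

section CompactSupport

variable {X : Type*} [TopologicalSpace X] [MeasurableSpace X] [OpensMeasurableSpace X]
  {ν : Measure X} [IsFiniteMeasureOnCompacts ν] {a b : X → ℝ}

theorem integrable_sq_of_hasCompactSupport (hb : Continuous b) (hbc : HasCompactSupport b) :
    Integrable (fun x => b x ^ 2) ν :=
  (hb.pow 2).integrable_of_hasCompactSupport hbc.sq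

theorem integrable_mul_sq_of_hasCompactSupport (ha : Continuous a) (hb : Continuous b)
    (hbc : HasCompactSupport b) : Integrable (fun x => a x * b x ^ 2) ν :=
  (ha.mul (hb.pow 2)).integrable_of_hasCompactSupport hbc.sq.mul_left

end CompactSupport

section PartialDeriv

variable {N : ℕ} {f g : EuclideanSpace ℝ (Fin N) → ℝ} {x : EuclideanSpace ℝ (Fin N)}

noncomputable def partialDeriv (i : Fin N) (f : EuclideanSpace ℝ (Fin N) → ℝ)
    (x : EuclideanSpace ℝ (Fin N)) : ℝ :=
  fderiv ℝ f x (EuclideanSpace.single i 1)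

theorem laplacian_eq_sum_partialDeriv (f : EuclideanSpace ℝ (Fin N) → ℝ)
    (x : EuclideanSpace ℝ (Fin N)) :
    laplacian f x = ∑ i, partialDeriv i (partialDeriv i f) x :=
  rfl

theorem norm_gradient_sq_eq_sum_partialDeriv_sq (f : EuclideanSpace ℝ (Fin N) → ℝ)
    (x : EuclideanSpace ℝ (Fin N)) :
    ‖gradient f x‖ ^ 2 = ∑ i, partialDeriv i f x ^ 2 := by
  rw [EuclideanSpace.norm_eq, Real.sq_sqrt (by positivity)]
  refine Finset.sum_congr rfl fun i _ => ?_
  rw [Real.norm_eq_abs, sq_abs, partialDeriv, gradient, ← InnerProductSpace.toDual_symm_apply,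
    EuclideanSpace.inner_single_right, one_mul, RCLike.conj_to_real]

theorem partialDeriv_mul (hf : DifferentiableAt ℝ f x) (hg : DifferentiableAt ℝ g x)
    (i : Fin N) :
    partialDeriv i (fun y => f y * g y) x =
      partialDeriv i f x * g x + f x * partialDeriv i g x := by
  simp only [partialDeriv, fderiv_fun_mul hf hg, add_apply, smul_apply, smul_eq_mul]
  ring

theorem HasDerivAt.partialDeriv_comp {φ : ℝ → ℝ} {φ' : ℝ} (hφ : HasDerivAt φ φ' (f x))
    (hf : DifferentiableAt ℝ f x) (i : Fin N) :
    partialDeriv i (fun y => φ (f y)) x = φ' * partialDeriv i f x := by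
  have h : HasFDerivAt (fun y => φ (f y)) (φ' • fderiv ℝ f x) x :=
    hφ.comp_hasFDerivAt x hf.hasFDerivAt
  rw [partialDeriv, h.fderiv]
  rfl

theorem ContDiff.partialDeriv {m n : WithTop ℕ∞} (hf : ContDiff ℝ n f) (hmn : m + 1 ≤ n)
    (i : Fin N) : ContDiff ℝ m (partialDeriv i f) :=
  (hf.fderiv_right hmn).clm_apply contDiff_const

theorem HasCompactSupport.partialDeriv (hf : HasCompactSupport f) (i : Fin N) :
    HasCompactSupport (partialDeriv i f) :=
  (hf.fderiv ℝ).comp_left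
    (g := fun L : EuclideanSpace ℝ (Fin N) →L[ℝ] ℝ => L (EuclideanSpace.single i 1)) rfl

theorem ContDiff.continuous_laplacian (hf : ContDiff ℝ 2 f) : Continuous (laplacian f) :=
  continuous_finsetSum _ fun i _ =>
    ((hf.partialDeriv (m := 1) le_rfl i).partialDeriv (m := 0) le_rfl i).continuous

theorem laplacian_comp {φ : ℝ → ℝ} (hf : ContDiff ℝ 2 f)
    (hφ : ∀ y, DifferentiableAt ℝ φ (f y)) (hφ' : DifferentiableAt ℝ (deriv φ) (f x)) :
    laplacian (fun y => φ (f y)) x =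
      deriv (deriv φ) (f x) * ‖gradient f x‖ ^ 2 + deriv φ (f x) * laplacian f x := by
  have hf1 : Differentiable ℝ f := hf.differentiable two_ne_zero
  have hfirst (i : Fin N) :
      partialDeriv i (fun y => φ (f y)) = fun y => deriv φ (f y) * partialDeriv i f y :=
    funext fun y => (hφ y).hasDerivAt.partialDeriv_comp (hf1 y) i
  have hsecond (i : Fin N) :
      partialDeriv i (partialDeriv i fun y => φ (f y)) x =
        deriv (deriv φ) (f x) * partialDeriv i f x ^ 2 +
          deriv φ (f x) * partialDeriv i (partialDeriv i f) x := by
    have hφ'f : DifferentiableAt ℝ (fun y => deriv φ (f y)) x := hφ'.comp x (hf1 x)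
    have hfi : DifferentiableAt ℝ (partialDeriv i f) x :=
      (hf.partialDeriv (m := 1) le_rfl i).differentiable one_ne_zero x
    rw [hfirst, partialDeriv_mul hφ'f hfi, hφ'.hasDerivAt.partialDeriv_comp (hf1 x)]
    ring
  simp only [laplacian_eq_sum_partialDeriv, norm_gradient_sq_eq_sum_partialDeriv_sq, hsecond,
    Finset.sum_add_distrib, Finset.mul_sum]

theorem integral_partialDeriv_mul_sq_add {w μ : EuclideanSpace ℝ (Fin N) → ℝ}
    (hw : ContDiff ℝ 2 w) (hμ : ContDiff ℝ 1 μ) (hμc : HasCompactSupport μ) (i : Fin N) :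
    ∫ x, (partialDeriv i (fun y => w y * μ y) x ^ 2 +
        partialDeriv i (partialDeriv i w) x * w x * μ x ^ 2) =
      ∫ x, w x ^ 2 * partialDeriv i μ x ^ 2 := by
  set p := fun y => w y * partialDeriv i w y
  set q := fun y => μ y * μ y
  have hw1 : ContDiff ℝ 1 w := hw.of_le one_le_two
  have hwi : ContDiff ℝ 1 (partialDeriv i w) := hw.partialDeriv le_rfl i
  have hp : ContDiff ℝ 1 p := hw1.mul hwi
  have hq : ContDiff ℝ 1 q := hμ.mul hμ
  have hqc : HasCompactSupport q := hμc.mul_left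
  have hdp (x) : partialDeriv i p x =
      partialDeriv i w x * partialDeriv i w x + w x * partialDeriv i (partialDeriv i w) x :=
    partialDeriv_mul (hw1.differentiable one_ne_zero x) (hwi.differentiable one_ne_zero x) i
  have hdq (x) : partialDeriv i q x = partialDeriv i μ x * μ x + μ x * partialDeriv i μ x :=
    partialDeriv_mul (hμ.differentiable one_ne_zero x) (hμ.differentiable one_ne_zero x) i
  have hdwμ (x) : partialDeriv i (fun y => w y * μ y) x =
      partialDeriv i w x * μ x + w x * partialDeriv i μ x :=
    partialDeriv_mul (hw1.differentiable one_ne_zero x) (hμ.differentiable one_ne_zero x) i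
  have hpdq : Integrable fun x => p x * partialDeriv i q x :=
    (hp.continuous.mul (hq.partialDeriv (m := 0) le_rfl i).continuous
      ).integrable_of_hasCompactSupport (hqc.partialDeriv i).mul_left
  have hdpq : Integrable fun x => partialDeriv i p x * q x :=
    ((hp.partialDeriv (m := 0) le_rfl i).continuous.mul hq.continuous
      ).integrable_of_hasCompactSupport hqc.mul_left
  have hibp : ∫ x, p x * partialDeriv i q x = -∫ x, partialDeriv i p x * q x :=
    integral_mul_fderiv_eq_neg_fderiv_mul_of_integrable hdpq hpdq
      ((hp.continuous.mul hq.continuous).integrable_of_hasCompactSupport hqc.mul_left)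
      (fun x _ => hp.differentiable one_ne_zero x) (fun x _ => hq.differentiable one_ne_zero x)
  have hrhs : Integrable fun x => w x ^ 2 * partialDeriv i μ x ^ 2 :=
    integrable_mul_sq_of_hasCompactSupport (hw.continuous.pow 2)
      (hμ.partialDeriv (m := 0) le_rfl i).continuous (hμc.partialDeriv i)
  calc ∫ x, (partialDeriv i (fun y => w y * μ y) x ^ 2 +
          partialDeriv i (partialDeriv i w) x * w x * μ x ^ 2)
      = ∫ x, (w x ^ 2 * partialDeriv i μ x ^ 2 +
          (p x * partialDeriv i q x + partialDeriv i p x * q x)) := by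
        congr 1 with x
        rw [hdwμ, hdp, hdq]
        ring
    _ = ∫ x, w x ^ 2 * partialDeriv i μ x ^ 2 := by
        rw [integral_add hrhs (hpdq.fun_add hdpq), integral_add hpdq hdpq, hibp,
          neg_add_cancel, add_zero]

theorem integral_norm_gradient_mul_sq_add {w μ : EuclideanSpace ℝ (Fin N) → ℝ}
    (hw : ContDiff ℝ 2 w) (hμ : ContDiff ℝ 1 μ) (hμc : HasCompactSupport μ) :
    ∫ x, (‖gradient (fun y => w y * μ y) x‖ ^ 2 + laplacian w x * w x * μ x ^ 2) =
      ∫ x, w x ^ 2 * ‖gradient μ x‖ ^ 2 := by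
  have hwμ : ContDiff ℝ 1 fun y => w y * μ y := (hw.of_le one_le_two).mul hμ
  have hwμc : HasCompactSupport fun y => w y * μ y := hμc.mul_left
  simp only [norm_gradient_sq_eq_sum_partialDeriv_sq, laplacian_eq_sum_partialDeriv,
    Finset.sum_mul, Finset.mul_sum, ← Finset.sum_add_distrib]
  rw [integral_finsetSum, integral_finsetSum]
  · exact Finset.sum_congr rfl fun i _ => integral_partialDeriv_mul_sq_add hw hμ hμc i
  · exact fun i _ => integrable_mul_sq_of_hasCompactSupport (hw.continuous.pow 2)
      (hμ.partialDeriv (m := 0) le_rfl i).continuous (hμc.partialDeriv i)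
  · intro i _
    have hwii : Continuous (partialDeriv i (partialDeriv i w)) :=
      ((hw.partialDeriv (m := 1) le_rfl i).partialDeriv (m := 0) le_rfl i).continuous
    exact (integrable_sq_of_hasCompactSupport (hwμ.partialDeriv (m := 0) le_rfl i).continuous
      (hwμc.partialDeriv i)).add
        (integrable_mul_sq_of_hasCompactSupport (hwii.mul hw.continuous) hμ.continuous hμc)

theorem integral_norm_gradient_mul_sq_add_potential {w μ V : EuclideanSpace ℝ (Fin N) → ℝ}
    (hw : ContDiff ℝ 2 w) (hV : Continuous V) (hμ : ContDiff ℝ 1 μ) (hμc : HasCompactSupport μ) :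
    ∫ x, (‖gradient (fun y => w y * μ y) x‖ ^ 2 + V x * (w x * μ x) ^ 2) =
      (∫ x, w x ^ 2 * ‖gradient μ x‖ ^ 2) -
        ∫ x, (laplacian w x - V x * w x) * w x * μ x ^ 2 := by
  have hwμ : ContDiff ℝ 1 fun y => w y * μ y := (hw.of_le one_le_two).mul hμ
  have hgrad := integrable_sq_of_hasCompactSupport (ν := volume)
    hwμ.continuous_gradient.norm (hμc.mul_left.gradient.norm)
  have hlap : Integrable fun x => laplacian w x * w x * μ x ^ 2 :=
    integrable_mul_sq_of_hasCompactSupport (hw.continuous_laplacian.mul hw.continuous)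
      hμ.continuous hμc
  have hpot : Integrable fun x => (laplacian w x - V x * w x) * w x * μ x ^ 2 :=
    integrable_mul_sq_of_hasCompactSupport
      ((hw.continuous_laplacian.sub (hV.mul hw.continuous)).mul hw.continuous) hμ.continuous hμc
  rw [← integral_norm_gradient_mul_sq_add hw hμ hμc, ← integral_sub (hgrad.fun_add hlap) hpot]
  congr 1 with x
  ring

end PartialDeriv

theorem ContDiffAt.differentiableAt_deriv {φ : ℝ → ℝ} {s : ℝ} (h : ContDiffAt ℝ 2 φ s) :
    DifferentiableAt ℝ (deriv φ) s :=
  ((h.fderiv_right (m := 1) le_rfl).differentiableAt one_ne_zero).clm_apply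
    (differentiableAt_const 1)

theorem ContDiff.continuous_deriv_deriv {G : ℝ → ℝ} (hG : ContDiff ℝ 2 G) :
    Continuous (deriv (deriv G)) := by
  simpa [iteratedDeriv_eq_iterate] using hG.continuous_iteratedDeriv 2 le_rfl

section Sqrt

variable {G : ℝ → ℝ} {s : ℝ}

theorem deriv_eventuallyEq_two_mul_sqrt_mul_deriv_sqrt (hG : ContDiff ℝ 2 G) (hs : 0 < G s) :
    deriv G =ᶠ[𝓝 s] fun t => 2 * √(G t) * deriv (fun r => √(G r)) t := by
  have hpos : IsOpen {t | 0 < G t} := isOpen_lt continuous_const hG.continuous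
  filter_upwards [hpos.mem_nhds hs] with t ht
  have hφ : HasDerivAt (fun r => √(G r)) (deriv (fun r => √(G r)) t) t :=
    ((hG.contDiffAt.sqrt (ne_of_gt ht)).differentiableAt two_ne_zero).hasDerivAt
  have hsq : G =ᶠ[𝓝 t] fun r => √(G r) ^ 2 := by
    filter_upwards [hpos.mem_nhds ht] with r hr
    exact (Real.sq_sqrt (le_of_lt hr)).symm
  rw [((hφ.fun_pow 2).congr_of_eventuallyEq hsq).deriv]
  ring

theorem deriv_deriv_eq_two_mul_deriv_sqrt_sq_add (hG : ContDiff ℝ 2 G) (hs : 0 < G s) :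
    deriv (deriv G) s = 2 * deriv (fun r => √(G r)) s ^ 2 +
      2 * √(G s) * deriv (deriv fun r => √(G r)) s := by
  have hφ : ContDiffAt ℝ 2 (fun r => √(G r)) s := hG.contDiffAt.sqrt hs.ne'
  have h₁ := (hφ.differentiableAt two_ne_zero).hasDerivAt
  have h₂ := hφ.differentiableAt_deriv.hasDerivAt
  rw [(((h₁.const_mul 2).mul h₂).congr_of_eventuallyEq
    (deriv_eventuallyEq_two_mul_sqrt_mul_deriv_sqrt hG hs)).deriv]
  ring

end Sqrt

theorem laplacian_sqrt_comp_sub_mul_sqrt_comp {N : ℕ} {G : ℝ → ℝ}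
    {u : EuclideanSpace ℝ (Fin N) → ℝ} {x : EuclideanSpace ℝ (Fin N)} (hG : ContDiff ℝ 2 G)
    (hu : ContDiff ℝ 2 u) (hGu : ∀ y, 0 < G (u y)) (hx : laplacian u x = deriv G (u x)) :
    laplacian (fun y => √(G (u y))) x - deriv (deriv G) (u x) * √(G (u x)) =
      (G (u x) - ‖gradient u x‖ ^ 2 / 2) * (-2 * deriv (deriv fun s => √(G s)) (u x)) := by
  have hφ (y) : ContDiffAt ℝ 2 (fun s => √(G s)) (u y) := hG.contDiffAt.sqrt (hGu y).ne'
  rw [laplacian_comp hu (fun y => (hφ y).differentiableAt two_ne_zero)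
      (hφ x).differentiableAt_deriv, hx,
    (deriv_eventuallyEq_two_mul_sqrt_mul_deriv_sqrt hG (hGu x)).eq_of_nhds,
    deriv_deriv_eq_two_mul_deriv_sqrt_sq_add hG (hGu x)]
  linear_combination (-2 * deriv (deriv fun s => √(G s)) (u x)) * Real.sq_sqrt (hGu x).le

theorem forall_contDiff_hasCompactSupport_iff_forall_mul {E : Type*} [NormedAddCommGroup E]
    [NormedSpace ℝ E] {n : WithTop ℕ∞} {w : E → ℝ} (hw : ContDiff ℝ n w) (hw0 : ∀ x, w x ≠ 0)
    (P : (E → ℝ) → Prop) :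
    (∀ v, ContDiff ℝ n v → HasCompactSupport v → P v) ↔
      ∀ μ, ContDiff ℝ n μ → HasCompactSupport μ → P fun x => w x * μ x := by
  refine ⟨fun h μ hμ hμc => h _ (hw.mul hμ) hμc.mul_left, fun h v hv hvc => ?_⟩
  have hvw : (fun x => w x * (v x / w x)) = v := funext fun x => mul_div_cancel₀ _ (hw0 x)
  simpa only [hvw] using h (fun x => v x / w x) (hv.div hw hw0)
    (hvc.mono fun x hx => left_ne_zero_of_mul hx)

theorem stability_characterization_general (N : ℕ) (G : ℝ → ℝ) (hG : ContDiff ℝ 2 G)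
    (u : EuclideanSpace ℝ (Fin N) → ℝ) (hu : ContDiff ℝ 2 u)
    (heq : ∀ x, laplacian u x = deriv G (u x))
    (hGu : ∀ x, 0 < G (u x)) :
    (∀ v : EuclideanSpace ℝ (Fin N) → ℝ, ContDiff ℝ 1 v → HasCompactSupport v →
        0 ≤ ∫ x, (‖gradient v x‖ ^ 2 + deriv (deriv G) (u x) * (v x) ^ 2)) ↔
    (∀ μ : EuclideanSpace ℝ (Fin N) → ℝ, ContDiff ℝ 1 μ → HasCompactSupport μ →
        ∫ x, (G (u x) - ‖gradient u x‖ ^ 2 / 2) *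
            (-2 * deriv (deriv (fun s => Real.sqrt (G s))) (u x)) *
            Real.sqrt (G (u x)) * (μ x) ^ 2 ≤
          ∫ x, G (u x) * ‖gradient μ x‖ ^ 2) := by
  have hw : ContDiff ℝ 2 fun x => √(G (u x)) := (hG.comp hu).sqrt fun x => (hGu x).ne'
  have hV : Continuous fun x => deriv (deriv G) (u x) :=
    hG.continuous_deriv_deriv.comp hu.continuous
  rw [forall_contDiff_hasCompactSupport_iff_forall_mul (hw.of_le one_le_two)
    fun x => (Real.sqrt_pos.2 (hGu x)).ne']
  refine forall₃_congr fun μ hμ hμc => ?_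
  simp only [integral_norm_gradient_mul_sq_add_potential hw hV hμ hμc, Real.sq_sqrt (hGu _).le,
    laplacian_sqrt_comp_sub_mul_sqrt_comp hG hu hGu (heq _), sub_nonneg]

theorem stability_characterization (N : ℕ) (G : ℝ → ℝ) (hG : ContDiff ℝ 2 G)
    (hGnonneg : ∀ s, 0 ≤ G s)
    (u : EuclideanSpace ℝ (Fin N) → ℝ) (hu : ContDiff ℝ 2 u)
    (hbdd : ∃ M : ℝ, ∀ x, |u x| ≤ M)
    (hnonconst : ¬ ∃ c : ℝ, ∀ x, u x = c)
    (heq : ∀ x, laplacian u x = deriv G (u x))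
    (hGu : ∀ x, 0 < G (u x)) :
    (∀ v : EuclideanSpace ℝ (Fin N) → ℝ, ContDiff ℝ 1 v → HasCompactSupport v →
        0 ≤ ∫ x, (‖gradient v x‖ ^ 2 + deriv (deriv G) (u x) * (v x) ^ 2)) ↔
    (∀ μ : EuclideanSpace ℝ (Fin N) → ℝ, ContDiff ℝ 1 μ → HasCompactSupport μ →
        ∫ x, (G (u x) - ‖gradient u x‖ ^ 2 / 2) *
            (-2 * deriv (deriv (fun s => Real.sqrt (G s))) (u x)) *
            Real.sqrt (G (u x)) * (μ x) ^ 2 ≤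
          ∫ x, G (u x) * ‖gradient μ x‖ ^ 2) :=
  stability_characterization_general N G hG u hu heq hGu
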